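/- arXiv:math/9908032 — 5 statements merged into one kernel-verified Lean document; each statement's English description precedes it below -/
import Mathlib

section
/- Let ρ : ℝ → ℝ be infinitely differentiable with ρ(x) > 0 for all x and ∫_ℝ ρ(x) dx = 1, and suppose that for all n, k ∈ ℕ the function x ↦ x^k · ρ^{(n)}(x) is Lebesgue-integrable on ℝ and tends to 0 as x → +∞ and as x → −∞. Let μ be the probability measure with density ρ with respect to Lebesgue measure, and let (P_m)_{m≥0} be real polynomials satisfying P_0 = 1, P_m′ = m·P_{m−1} for all m ≥ 1, and ∫ P_m(x) dμ(x) = 0 for all m ≥ 1. Then for all n, m ∈ ℕ: ∫_ℝ P_m(x) · (−1)^n · ρ^{(n)}(x) dx = n! if n = m, and = 0 if n ≠ m. -/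
open MeasureTheory Polynomial Filter

/-- One-dimensional biorthogonality of the Appell system: the Appell
polynomials `P_m` of the measure `dμ = ρ dx` and the functions
`Q_n = (-1)^n ρ^{(n)}/ρ` satisfy `⟨⟨Q_n, P_m⟩⟩_μ = δ_{nm} n!`. -/
theorem appell_biorthogonality_one_dim
    (ρ : ℝ → ℝ) (hρ : ContDiff ℝ (⊤ : ℕ∞) ρ) (hpos : ∀ x, 0 < ρ x)
    (hnorm : ∫ x : ℝ, ρ x = 1)
    (hint : ∀ n k : ℕ, Integrable (fun x : ℝ => x ^ k * iteratedDeriv n ρ x))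
    (htop : ∀ n k : ℕ,
      Tendsto (fun x : ℝ => x ^ k * iteratedDeriv n ρ x) atTop (nhds 0))
    (hbot : ∀ n k : ℕ,
      Tendsto (fun x : ℝ => x ^ k * iteratedDeriv n ρ x) atBot (nhds 0))
    (μ : Measure ℝ)
    (hμ : μ = volume.withDensity fun x => ENNReal.ofReal (ρ x))
    (P : ℕ → Polynomial ℝ)
    (hP0 : P 0 = 1)
    (hPderiv : ∀ m : ℕ, 1 ≤ m →
      Polynomial.derivative (P m) = Polynomial.C (m : ℝ) * P (m - 1))
    (hPmean : ∀ m : ℕ, 1 ≤ m → ∫ x : ℝ, (P m).eval x ∂μ = 0) :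
    ∀ n m : ℕ,
      (∫ x : ℝ, (P m).eval x * ((-1 : ℝ) ^ n * iteratedDeriv n ρ x))
        = if n = m then (n.factorial : ℝ) else 0 := by
  -- integrability of polynomial times iterated derivative
  have key_int : ∀ (n : ℕ) (q : Polynomial ℝ),
      Integrable (fun x : ℝ => q.eval x * iteratedDeriv n ρ x) := by
    intro n q
    have : (fun x : ℝ => q.eval x * iteratedDeriv n ρ x)
        = fun x : ℝ => ∑ i ∈ Finset.range (q.natDegree + 1),
            q.coeff i * (x ^ i * iteratedDeriv n ρ x) := by
      funext x
      rw [Polynomial.eval_eq_sum_range, Finset.sum_mul]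
      congr 1; funext i; ring
    rw [this]
    exact integrable_finset_sum _ fun i _ => (hint n i).const_mul _
  -- limits at infinity
  have key_top : ∀ (n : ℕ) (q : Polynomial ℝ),
      Tendsto (fun x : ℝ => q.eval x * iteratedDeriv n ρ x) atTop (nhds 0) := by
    intro n q
    have : (fun x : ℝ => q.eval x * iteratedDeriv n ρ x)
        = fun x : ℝ => ∑ i ∈ Finset.range (q.natDegree + 1),
            q.coeff i * (x ^ i * iteratedDeriv n ρ x) := by
      funext x
      rw [Polynomial.eval_eq_sum_range, Finset.sum_mul]
      congr 1; funext i; ring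
    rw [this]
    have := tendsto_finset_sum (Finset.range (q.natDegree + 1))
      (fun i _ => ((htop n i).const_mul (q.coeff i)))
    simpa using this
  have key_bot : ∀ (n : ℕ) (q : Polynomial ℝ),
      Tendsto (fun x : ℝ => q.eval x * iteratedDeriv n ρ x) atBot (nhds 0) := by
    intro n q
    have : (fun x : ℝ => q.eval x * iteratedDeriv n ρ x)
        = fun x : ℝ => ∑ i ∈ Finset.range (q.natDegree + 1),
            q.coeff i * (x ^ i * iteratedDeriv n ρ x) := by
      funext x
      rw [Polynomial.eval_eq_sum_range, Finset.sum_mul]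
      congr 1; funext i; ring
    rw [this]
    have := tendsto_finset_sum (Finset.range (q.natDegree + 1))
      (fun i _ => ((hbot n i).const_mul (q.coeff i)))
    simpa using this
  -- derivative facts
  have hasD : ∀ (n : ℕ) (x : ℝ),
      HasDerivAt (iteratedDeriv n ρ) (iteratedDeriv (n + 1) ρ x) x := by
    intro n x
    have hd : Differentiable ℝ (iteratedDeriv n ρ) :=
      hρ.differentiable_iteratedDeriv n (by exact_mod_cast ENat.coe_lt_top n)
    have := (hd x).hasDerivAt
    rwa [iteratedDeriv_succ]
  -- integration by parts step
  have step : ∀ (n : ℕ) (q : Polynomial ℝ),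
      (∫ x : ℝ, q.eval x * iteratedDeriv (n + 1) ρ x)
        = - ∫ x : ℝ, (Polynomial.derivative q).eval x * iteratedDeriv n ρ x := by
    intro n q
    have h := integral_mul_deriv_eq_deriv_mul
      (u := fun x : ℝ => q.eval x) (v := iteratedDeriv n ρ)
      (u' := fun x : ℝ => (Polynomial.derivative q).eval x)
      (v' := iteratedDeriv (n + 1) ρ)
      (fun x _ => q.hasDerivAt x) (fun x _ => hasD n x)
      (key_int (n + 1) q) (key_int n (Polynomial.derivative q))
      (key_bot n q) (key_top n q)
    simpa using h
  -- main reduction: n integrations by parts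
  have key : ∀ (n : ℕ) (q : Polynomial ℝ),
      (∫ x : ℝ, q.eval x * iteratedDeriv n ρ x)
        = (-1 : ℝ) ^ n *
            ∫ x : ℝ, ((Polynomial.derivative)^[n] q).eval x * ρ x := by
    intro n
    induction n with
    | zero => intro q; simp [iteratedDeriv_zero]
    | succ n ih =>
        intro q
        rw [step n q, ih (Polynomial.derivative q)]
        rw [Function.iterate_succ_apply]
        ring
  -- integrals against μ versus against ρ dx
  have hμint : ∀ q : Polynomial ℝ,
      (∫ x : ℝ, q.eval x ∂μ) = ∫ x : ℝ, q.eval x * ρ x := by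
    intro q
    have hmeas : Measurable fun x : ℝ => (ρ x).toNNReal :=
      (hρ.continuous.measurable).real_toNNReal
    rw [hμ]
    have : (fun x : ℝ => ENNReal.ofReal (ρ x))
        = fun x : ℝ => ((ρ x).toNNReal : ENNReal) := rfl
    rw [this, integral_withDensity_eq_integral_smul hmeas]
    congr 1
    funext x
    simp [NNReal.smul_def, Real.coe_toNNReal _ (hpos x).le, mul_comm]
  -- iterated derivatives of the Appell polynomials
  have iterD : ∀ n m : ℕ, n ≤ m →
      (Polynomial.derivative)^[n] (P m)
        = Polynomial.C ((m.descFactorial n : ℕ) : ℝ) * P (m - n) := by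
    intro n
    induction n with
    | zero => intro m _; simp
    | succ n ih =>
        intro m hnm
        have hn : n ≤ m := le_of_lt (Nat.lt_of_succ_le hnm)
        rw [Function.iterate_succ_apply', ih m hn]
        have h1 : 1 ≤ m - n := by omega
        rw [Polynomial.derivative_C_mul, hPderiv (m - n) h1]
        have : m - n - 1 = m - (n + 1) := by omega
        rw [this, ← mul_assoc, ← Polynomial.C_mul]
        congr 2
        rw [Nat.descFactorial_succ]
        push_cast [Nat.sub_sub]
        ring
  intro n m
  have hrw : (∫ x : ℝ, (P m).eval x * ((-1 : ℝ) ^ n * iteratedDeriv n ρ x))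
      = (-1 : ℝ) ^ n * ∫ x : ℝ, (P m).eval x * iteratedDeriv n ρ x := by
    rw [← integral_const_mul]
    congr 1; funext x; ring
  rw [hrw, key n (P m), ← mul_assoc, ← mul_pow]
  simp only [neg_mul_neg, one_mul, one_pow]
  rcases lt_trichotomy n m with h | h | h
  · -- n < m: mean zero
    have hne : n ≠ m := ne_of_lt h
    rw [if_neg hne, iterD n m h.le]
    have h1 : 1 ≤ m - n := by omega
    have hmean0 : (∫ x : ℝ, (P (m - n)).eval x * ρ x) = 0 := by
      have := hPmean (m - n) h1
      rwa [hμint] at this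
    have hconst : (∫ x : ℝ, (Polynomial.C ((m.descFactorial n : ℕ) : ℝ) * P (m - n)).eval x * ρ x)
        = ((m.descFactorial n : ℕ) : ℝ) * ∫ x : ℝ, (P (m - n)).eval x * ρ x := by
      rw [← integral_const_mul]
      congr 1; funext x; simp; ring
    rw [hconst, hmean0, mul_zero]
  · -- n = m
    subst h
    rw [if_pos rfl, iterD n n le_rfl]
    simp only [Nat.sub_self, hP0, Nat.descFactorial_self]
    have : (∫ x : ℝ, (Polynomial.C ((n.factorial : ℕ) : ℝ) * 1).eval x * ρ x)
        = ((n.factorial : ℕ) : ℝ) * ∫ x : ℝ, ρ x := by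
      rw [← integral_const_mul]
      congr 1; funext x; simp
    rw [this, hnorm, mul_one]
  · -- n > m: iterated derivative vanishes
    have hne : n ≠ m := ne_of_gt h
    rw [if_neg hne]
    have hz : (Polynomial.derivative)^[n] (P m) = 0 := by
      have h1 : (Polynomial.derivative)^[m + 1] (P m) = 0 := by
        rw [Function.iterate_succ_apply', iterD m m le_rfl]
        simp [hP0]
      have : n = (n - (m + 1)) + (m + 1) := by omega
      rw [this, Function.iterate_add_apply, h1]
      clear this
      induction (n - (m + 1)) with
      | zero => simp
      | succ k ihk => rw [Function.iterate_succ_apply', ihk]; simp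
    rw [hz]
    simp
end

section
/- For every n ∈ ℕ and every x ∈ ℝ: x^n = ∑_{k=0}^{n} (n choose k) · P_k(x) · M_{n−k}. -/
/-- The formal exponential series `E_x = ∑ x^k T^k / k!`. -/
noncomputable def expSeries (x : ℝ) : PowerSeries ℝ :=
  PowerSeries.mk fun k => x ^ k / (k.factorial : ℝ)

/-- The one-dimensional Appell polynomials of `l`:
`P_n(x) = n! ⬝ coeff_n (E_x ⬝ l⁻¹)`. -/
noncomputable def appellP (l : PowerSeries ℝ) (n : ℕ) (x : ℝ) : ℝ :=
  (n.factorial : ℝ) * PowerSeries.coeff n (expSeries x * l⁻¹)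

/-- The moments of `l`: `M_n = n! ⬝ coeff_n l`. -/
noncomputable def moment (l : PowerSeries ℝ) (n : ℕ) : ℝ :=
  (n.factorial : ℝ) * PowerSeries.coeff n l

/-- (P2): `x^n = ∑_{k=0}^n (n choose k) P_k(x) M_{n-k}`. -/
theorem appell_P2 (l : PowerSeries ℝ) (hl : PowerSeries.constantCoeff l = 1)
    (n : ℕ) (x : ℝ) :
    x ^ n =
      ∑ k ∈ Finset.range (n + 1),
        (n.choose k : ℝ) * appellP l k x * moment l (n - k) := by
  have hl0 : PowerSeries.constantCoeff l ≠ 0 := by rw [hl]; norm_num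
  have hE : expSeries x * l⁻¹ * l = expSeries x := by
    rw [mul_assoc, PowerSeries.inv_mul_cancel l hl0, mul_one]
  have hcoeff : (x ^ n / (n.factorial : ℝ)) =
      ∑ k ∈ Finset.range (n + 1),
        PowerSeries.coeff k (expSeries x * l⁻¹) * PowerSeries.coeff (n - k) l := by
    have := congrArg (PowerSeries.coeff n) hE
    rw [PowerSeries.coeff_mul, Finset.Nat.sum_antidiagonal_eq_sum_range_succ_mk] at this
    simp only [expSeries, PowerSeries.coeff_mk] at this
    rw [show expSeries x = PowerSeries.mk fun k => x ^ k / (k.factorial:ℝ) from rfl, ← this]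
  have hfac : (n.factorial : ℝ) ≠ 0 := Nat.cast_ne_zero.mpr n.factorial_ne_zero
  have : x ^ n = (n.factorial : ℝ) *
      ∑ k ∈ Finset.range (n + 1),
        PowerSeries.coeff k (expSeries x * l⁻¹) * PowerSeries.coeff (n - k) l := by
    rw [← hcoeff]; field_simp
  rw [this, Finset.mul_sum]
  refine Finset.sum_congr rfl fun k hk => ?_
  have hkn : k ≤ n := Nat.lt_succ_iff.mp (Finset.mem_range.mp hk)
  have hch : (n.choose k : ℝ) * k.factorial * (n - k).factorial = n.factorial := by
    rw [← Nat.cast_mul, ← Nat.cast_mul, Nat.choose_mul_factorial_mul_factorial hkn]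
  rw [appellP, moment, ← hch]; ring
end

section
/- Let μ be a finite Borel measure on ℝ with ∫ exp(ε₀·|x|) dμ(x) < ∞ for some ε₀ > 0, and let L(θ) := ∫ exp(θ·x) dμ(x) for complex θ with |Re θ| ≤ ε₀. Let 0 < ε < ε₀ and σ > 0, and let α : ℂ → ℂ be holomorphic on an open set containing the closed disc {θ : |θ| ≤ σ}, with α(0) = 0, |α(θ)| ≤ ε for all |θ| ≤ σ, and |L(α(θ))| ≥ 1/2 for all |θ| ≤ σ. For z ∈ ℂ define P_n^α(z) as the n-th derivative at θ = 0 of the function θ ↦ exp(z·α(θ)) / L(α(θ)). Then for all n ∈ ℕ and all z ∈ ℂ: |P_n^α(z)| ≤ 2 · n! · σ^{−n} · exp(ε·|z|). -/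
open MeasureTheory

open Metric

private 
lemma cauchy_est {f : ℂ → ℂ} {σ M : ℝ} (hσ : 0 < σ)
    (hd : DifferentiableOn ℂ f (closedBall (0:ℂ) σ))
    (hM : 0 ≤ M) (hb : ∀ θ : ℂ, ‖θ‖ ≤ σ → ‖f θ‖ ≤ M) (n : ℕ) :
    ‖iteratedDeriv n f 0‖ ≤ n.factorial * M / σ ^ n := by
  have hcoe : ((σ.toNNReal : NNReal) : ℝ) = σ := Real.coe_toNNReal σ hσ.le
  have hd' : DifferentiableOn ℂ f (closedBall (0:ℂ) (σ.toNNReal : ℝ)) := by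
    rwa [hcoe]
  have hR : 0 < σ.toNNReal := by simpa using hσ
  have h := hd'.hasFPowerSeriesOnBall hR
  set p := cauchyPowerSeries f 0 (σ.toNNReal : ℝ) with hp
  have h1 : iteratedDeriv n f 0 = iteratedFDeriv ℂ n f 0 (fun _ => 1) := by
    rw [iteratedDeriv_eq_iteratedFDeriv]
  have h2 := h.factorial_smul (1 : ℂ) n
  have h3 : ‖iteratedDeriv n f 0‖ = n.factorial * ‖p n (fun _ => (1:ℂ))‖ := by
    rw [h1, ← h2, ← Nat.cast_smul_eq_nsmul ℝ, norm_smul, Real.norm_natCast]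
  have h4 : ‖p n (fun _ => (1:ℂ))‖ ≤ ‖p n‖ := by
    have := (p n).le_opNorm (fun _ => (1:ℂ))
    simpa using this
  have hcont : ContinuousOn (fun θ : ℝ => ‖f (circleMap 0 σ θ)‖) (Set.uIcc 0 (2*Real.pi)) := by
    apply ContinuousOn.norm
    apply hd.continuousOn.comp (continuous_circleMap 0 σ).continuousOn
    intro θ _
    simp [circleMap, abs_of_pos hσ]
  have hint : IntervalIntegrable (fun θ : ℝ => ‖f (circleMap 0 σ θ)‖) volume 0 (2*Real.pi) :=
    hcont.intervalIntegrable
  have h5 : (∫ θ : ℝ in (0)..2 * Real.pi, ‖f (circleMap 0 σ θ)‖) ≤ 2 * Real.pi * M := by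
    calc (∫ θ : ℝ in (0)..2 * Real.pi, ‖f (circleMap 0 σ θ)‖)
        ≤ ∫ _ : ℝ in (0)..2 * Real.pi, M := by
          apply intervalIntegral.integral_mono_on Real.two_pi_pos.le hint
            intervalIntegrable_const
          intro θ _
          apply hb
          simp [circleMap, abs_of_pos hσ]
      _ = 2 * Real.pi * M := by simp [mul_comm]
  have h6 : ‖p n‖ ≤ M * (σ⁻¹) ^ n := by
    have := norm_cauchyPowerSeries_le f 0 ((σ.toNNReal : NNReal) : ℝ) n
    rw [hp]
    refine this.trans ?_
    rw [hcoe, abs_of_pos hσ]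
    gcongr
    rw [inv_mul_le_iff₀ Real.two_pi_pos]
    · exact h5.trans (le_of_eq (by ring))
  calc ‖iteratedDeriv n f 0‖ = n.factorial * ‖p n (fun _ => (1:ℂ))‖ := h3
    _ ≤ n.factorial * (M * σ⁻¹ ^ n) :=
        mul_le_mul_of_nonneg_left (h4.trans h6) (Nat.cast_nonneg _)
    _ = n.factorial * M / σ ^ n := by
        rw [inv_pow]
        ring

private 
lemma laplace_diff (μ : Measure ℝ) [IsFiniteMeasure μ] (ε₀ : ℝ)
    (hexp : Integrable (fun x : ℝ => Real.exp (ε₀ * |x|)) μ)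
    (θ₀ : ℂ) (hθ₀ : |θ₀.re| < ε₀) :
    DifferentiableAt ℂ (fun θ : ℂ => ∫ x : ℝ, Complex.exp (θ * x) ∂μ) θ₀ := by
  set δ := (ε₀ - |θ₀.re|) / 2 with hδdef
  have hδ : 0 < δ := by rw [hδdef]; linarith
  set ε' := |θ₀.re| + δ with hε'def
  have hε'₀ : ε' < ε₀ := by rw [hε'def, hδdef]; linarith
  have hball : ∀ θ : ℂ, θ ∈ ball θ₀ δ → |θ.re| ≤ ε' := by
    intro θ hθ
    have h1 : |θ.re - θ₀.re| ≤ ‖θ - θ₀‖ := by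
      have := Complex.abs_re_le_norm (θ - θ₀)
      simpa using this
    have h2 : ‖θ - θ₀‖ < δ := by rwa [← dist_eq_norm, ← mem_ball]
    calc |θ.re| = |θ₀.re + (θ.re - θ₀.re)| := by ring_nf
      _ ≤ |θ₀.re| + |θ.re - θ₀.re| := abs_add_le _ _
      _ ≤ |θ₀.re| + δ := by linarith [h1.trans h2.le]
  have key := hasDerivAt_integral_of_dominated_loc_of_deriv_le (μ := μ)
    (F := fun (θ : ℂ) (x : ℝ) => Complex.exp (θ * x))
    (F' := fun (θ : ℂ) (x : ℝ) => Complex.exp (θ * x) * x)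
    (x₀ := θ₀) (bound := fun x : ℝ => (ε₀ - ε')⁻¹ * Real.exp (ε₀ * |x|)) (ball_mem_nhds θ₀ hδ)
    ?_ ?_ ?_ ?_ ?_ ?_
  · exact key.2.differentiableAt
  · exact Filter.Eventually.of_forall fun θ =>
      (Complex.continuous_exp.comp (by continuity)).aestronglyMeasurable
  · apply hexp.mono' ((Complex.continuous_exp.comp (by continuity)).aestronglyMeasurable)
    refine Filter.Eventually.of_forall fun x => ?_
    simp only [Function.comp_apply, Complex.norm_exp]
    apply Real.exp_le_exp.2
    have : (θ₀ * (x:ℂ)).re = θ₀.re * x := by simp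
    rw [this]
    calc θ₀.re * x ≤ |θ₀.re * x| := le_abs_self _
      _ = |θ₀.re| * |x| := abs_mul _ _
      _ ≤ ε₀ * |x| := by apply mul_le_mul_of_nonneg_right hθ₀.le (abs_nonneg _)
  · exact ((Complex.continuous_exp.comp (by continuity)).mul
      Complex.continuous_ofReal).aestronglyMeasurable
  · refine Filter.Eventually.of_forall fun x => fun θ hθ => ?_
    rw [norm_mul, Complex.norm_exp, Complex.norm_real, Real.norm_eq_abs]
    have hre : (θ * (x:ℂ)).re = θ.re * x := by simp
    rw [hre]
    have h1 : Real.exp (θ.re * x) ≤ Real.exp (ε' * |x|) := by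
      apply Real.exp_le_exp.2
      calc θ.re * x ≤ |θ.re * x| := le_abs_self _
        _ = |θ.re| * |x| := abs_mul _ _
        _ ≤ ε' * |x| := mul_le_mul_of_nonneg_right (hball θ hθ) (abs_nonneg _)
    have h2 : |x| ≤ (ε₀ - ε')⁻¹ * Real.exp ((ε₀ - ε') * |x|) := by
      rw [le_inv_mul_iff₀ (by linarith : (0:ℝ) < ε₀ - ε')]
      linarith [Real.add_one_le_exp ((ε₀ - ε') * |x|)]
    calc Real.exp (θ.re * x) * |x| ≤ Real.exp (ε' * |x|) * ((ε₀ - ε')⁻¹ *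
          Real.exp ((ε₀ - ε') * |x|)) :=
        mul_le_mul h1 h2 (abs_nonneg _) (Real.exp_nonneg _)
      _ = (ε₀ - ε')⁻¹ * Real.exp (ε₀ * |x|) := by
          rw [show ε₀ * |x| = ε' * |x| + (ε₀ - ε') * |x| by ring, Real.exp_add]
          ring
  · exact hexp.const_mul _
  · refine Filter.Eventually.of_forall fun x => fun θ _ => ?_
    have := (hasDerivAt_mul_const (x:ℂ) (x := θ)).cexp
    simpa using this

/-- Growth estimate (P_α6) for the generalized Appell polynomials in one
dimension: `|P_n^α(z)| ≤ 2 n! σ^{-n} exp(ε |z|)`. -/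
theorem appell_Pα6 (μ : Measure ℝ) [IsFiniteMeasure μ]
    (ε₀ : ℝ) (hε₀ : 0 < ε₀)
    (hexp : Integrable (fun x : ℝ => Real.exp (ε₀ * |x|)) μ)
    (L : ℂ → ℂ)
    (hL : ∀ θ : ℂ, |θ.re| ≤ ε₀ → L θ = ∫ x : ℝ, Complex.exp (θ * x) ∂μ)
    (ε σ : ℝ) (hε : 0 < ε) (hεε₀ : ε < ε₀) (hσ : 0 < σ)
    (α : ℂ → ℂ)
    (hα : ∃ U : Set ℂ, IsOpen U ∧ Metric.closedBall (0 : ℂ) σ ⊆ U ∧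
      DifferentiableOn ℂ α U)
    (hα0 : α 0 = 0)
    (hαbound : ∀ θ : ℂ, ‖θ‖ ≤ σ → ‖α θ‖ ≤ ε)
    (hLbound : ∀ θ : ℂ, ‖θ‖ ≤ σ → (1 : ℝ) / 2 ≤ ‖L (α θ)‖)
    (P : ℕ → ℂ → ℂ)
    (hP : ∀ n : ℕ, ∀ z : ℂ,
      P n z = iteratedDeriv n (fun θ => Complex.exp (z * α θ) / L (α θ)) 0) :
    ∀ n : ℕ, ∀ z : ℂ,
      ‖P n z‖ ≤ 2 * (n.factorial : ℝ) * σ ^ (-(n : ℤ)) * Real.exp (ε * ‖z‖) := by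
  intro n z
  obtain ⟨U, hUopen, hUball, hUdiff⟩ := hα
  have hSopen : IsOpen {θ : ℂ | |θ.re| < ε₀} := by
    have : {θ : ℂ | |θ.re| < ε₀} = Complex.re ⁻¹' (Set.Ioo (-ε₀) ε₀) := by
      ext w; simp [abs_lt]
    rw [this]; exact isOpen_Ioo.preimage Complex.continuous_re
  have hLd : ∀ w : ℂ, |w.re| < ε₀ → DifferentiableAt ℂ L w := by
    intro w hw
    have hg := laplace_diff μ ε₀ hexp w hw
    apply hg.congr_of_eventuallyEq
    filter_upwards [hSopen.mem_nhds hw] with θ hθ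
    exact hL θ hθ.le
  set W : Set ℂ := U ∩ α ⁻¹' {θ : ℂ | |θ.re| < ε₀} with hW
  have hWopen : IsOpen W := (hUdiff.continuousOn).isOpen_inter_preimage hUopen hSopen
  have hLAcont : ContinuousOn (fun θ => L (α θ)) W := fun θ hθ =>
    (hLd (α θ) hθ.2).continuousAt.comp_continuousWithinAt
      ((hUdiff.continuousOn.mono Set.inter_subset_left) θ hθ)
  set V : Set ℂ := W ∩ (fun θ => L (α θ)) ⁻¹' ({0}ᶜ) with hV
  have hVopen : IsOpen V := hLAcont.isOpen_inter_preimage hWopen isOpen_compl_singleton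
  have hsub : Metric.closedBall (0:ℂ) σ ⊆ V := by
    intro θ hθ
    have hθσ : ‖θ‖ ≤ σ := by simpa [Metric.mem_closedBall, dist_zero_right] using hθ
    refine ⟨⟨hUball hθ, ?_⟩, ?_⟩
    · show |(α θ).re| < ε₀
      calc |(α θ).re| ≤ ‖α θ‖ := Complex.abs_re_le_norm _
        _ ≤ ε := hαbound θ hθσ
        _ < ε₀ := hεε₀
    · have := hLbound θ hθσ
      simp only [Set.mem_preimage, Set.mem_compl_iff, Set.mem_singleton_iff]
      intro h0
      rw [h0] at this
      norm_num at this
  have hfd : DifferentiableOn ℂ (fun θ => Complex.exp (z * α θ) / L (α θ))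
      (Metric.closedBall (0:ℂ) σ) := by
    apply DifferentiableOn.mono _ hsub
    intro θ hθ
    apply DifferentiableAt.differentiableWithinAt
    have hαd : DifferentiableAt ℂ α θ :=
      (hUdiff θ hθ.1.1).differentiableAt (hUopen.mem_nhds hθ.1.1)
    have hLαd : DifferentiableAt ℂ (fun θ => L (α θ)) θ := (hLd (α θ) hθ.1.2).comp θ hαd
    exact ((hαd.const_mul z).cexp).div hLαd hθ.2
  have hb : ∀ θ : ℂ, ‖θ‖ ≤ σ →
      ‖Complex.exp (z * α θ) / L (α θ)‖ ≤ 2 * Real.exp (ε * ‖z‖) := by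
    intro θ hθσ
    have hnum : ‖Complex.exp (z * α θ)‖ ≤ Real.exp (ε * ‖z‖) := by
      rw [Complex.norm_exp]
      apply Real.exp_le_exp.2
      calc (z * α θ).re ≤ |(z * α θ).re| := le_abs_self _
        _ ≤ ‖z * α θ‖ := Complex.abs_re_le_norm _
        _ = ‖z‖ * ‖α θ‖ := norm_mul _ _
        _ ≤ ‖z‖ * ε := mul_le_mul_of_nonneg_left (hαbound θ hθσ) (norm_nonneg _)
        _ = ε * ‖z‖ := mul_comm _ _
    rw [norm_div]
    calc ‖Complex.exp (z * α θ)‖ / ‖L (α θ)‖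
        ≤ Real.exp (ε * ‖z‖) / (1/2) :=
          div_le_div₀ (Real.exp_nonneg _) hnum (by norm_num) (hLbound θ hθσ)
      _ = 2 * Real.exp (ε * ‖z‖) := by ring
  have := cauchy_est hσ hfd (by positivity) hb n
  rw [hP n z]
  refine this.trans (le_of_eq ?_)
  rw [zpow_neg, zpow_natCast]
  ring
end

section
/- Let μ be a Borel probability measure on ℝ with ∫ exp(ε₀·|x|) dμ(x) < ∞ for some ε₀ > 0, and let L(θ) := ∫ exp(θ·x) dμ(x) for complex θ with |Re θ| ≤ ε₀. Let 0 < ε < ε₀ and σ > 0, and let α : ℂ → ℂ be holomorphic on an open set containing the closed disc {θ : |θ| ≤ σ}, with α(0) = 0, |α(θ)| ≤ ε for all |θ| ≤ σ, and L(α(θ)) ≠ 0 for all |θ| ≤ σ. For x ∈ ℝ define P_n^α(x) as the n-th derivative at θ = 0 of the function θ ↦ exp(x·α(θ)) / L(α(θ)). Then for every n ≥ 1 the function x ↦ P_n^α(x) is μ-integrable and ∫ P_n^α(x) dμ(x) = 0. -/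
open MeasureTheory Metric Set

section helpers

lemma appell_norm_cexp (θ : ℂ) (x : ℝ) : ‖Complex.exp (θ * x)‖ = Real.exp (θ.re * x) := by
  rw [Complex.norm_exp]
  norm_num [Complex.mul_re]

lemma appell_abs_le_exp (δ : ℝ) (hδ : 0 < δ) (x : ℝ) : |x| ≤ δ⁻¹ * Real.exp (δ * |x|) := by
  have h1 : δ * |x| + 1 ≤ Real.exp (δ * |x|) := Real.add_one_le_exp _
  have h2 : (0:ℝ) < δ⁻¹ := inv_pos.2 hδ
  calc |x| = δ⁻¹ * (δ * |x|) := by field_simp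
    _ ≤ δ⁻¹ * Real.exp (δ * |x|) := by nlinarith

lemma appell_exp_le (θ : ℂ) (x b : ℝ) (hθ : |θ.re| ≤ b) : θ.re * x ≤ b * |x| :=
  calc θ.re * x ≤ |θ.re * x| := le_abs_self _
    _ = |θ.re| * |x| := abs_mul _ _
    _ ≤ b * |x| := mul_le_mul_of_nonneg_right hθ (abs_nonneg x)

lemma appell_exp_integrable (μ : Measure ℝ) (ε₀ : ℝ)
    (hexp : Integrable (fun x : ℝ => Real.exp (ε₀ * |x|)) μ)
    (θ : ℂ) (hθ : |θ.re| ≤ ε₀) : Integrable (fun x : ℝ => Complex.exp (θ * x)) μ := by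
  refine hexp.mono' (Continuous.aestronglyMeasurable (by fun_prop)) ?_
  filter_upwards with x
  rw [appell_norm_cexp]
  exact Real.exp_le_exp.2 (appell_exp_le θ x ε₀ hθ)

lemma appell_L_diff (μ : Measure ℝ) (ε₀ : ℝ)
    (hexp : Integrable (fun x : ℝ => Real.exp (ε₀ * |x|)) μ)
    (L : ℂ → ℂ) (hL : ∀ θ : ℂ, |θ.re| ≤ ε₀ → L θ = ∫ x : ℝ, Complex.exp (θ * x) ∂μ)
    (θ₀ : ℂ) (h : |θ₀.re| < ε₀) : DifferentiableAt ℂ L θ₀ := by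
  set δ : ℝ := (ε₀ - |θ₀.re|) / 2 with hδdef
  have hδ : 0 < δ := by rw [hδdef]; linarith
  have hre : ∀ θ ∈ ball θ₀ δ, |θ.re| ≤ ε₀ - δ := by
    intro θ hθ
    have h1 : |θ.re - θ₀.re| ≤ ‖θ - θ₀‖ := by
      simpa using Complex.abs_re_le_norm (θ - θ₀)
    have h2 : ‖θ - θ₀‖ < δ := by
      simpa [dist_eq_norm] using (mem_ball.1 hθ)
    calc |θ.re| = |θ₀.re + (θ.re - θ₀.re)| := by ring_nf
      _ ≤ |θ₀.re| + |θ.re - θ₀.re| := abs_add_le _ _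
      _ ≤ |θ₀.re| + δ := by linarith
      _ ≤ ε₀ - δ := by rw [hδdef]; linarith
  have key := hasDerivAt_integral_of_dominated_loc_of_deriv_le (μ := μ)
      (F := fun θ x => Complex.exp (θ * x))
      (F' := fun θ (x : ℝ) => (x : ℂ) * Complex.exp (θ * x))
      (x₀ := θ₀) (bound := fun x => δ⁻¹ * Real.exp (ε₀ * |x|)) (ball_mem_nhds θ₀ hδ)
      (Filter.Eventually.of_forall fun θ =>
        (Continuous.aestronglyMeasurable (by fun_prop)))
      (appell_exp_integrable μ ε₀ hexp θ₀ h.le)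
      (Continuous.aestronglyMeasurable (by fun_prop))
      ?_ (hexp.const_mul δ⁻¹) ?_
  · have heq : (fun θ => ∫ x : ℝ, Complex.exp (θ * x) ∂μ) =ᶠ[nhds θ₀] L := by
      refine Filter.eventuallyEq_of_mem (isOpen_ball.mem_nhds (mem_ball_self hδ)) ?_
      intro θ hθ
      exact (hL θ ((hre θ hθ).trans (by linarith))).symm
    exact (key.2.differentiableAt.congr_of_eventuallyEq heq.symm)
  · filter_upwards with x
    intro θ hθ
    rw [norm_mul, appell_norm_cexp, Complex.norm_real, Real.norm_eq_abs]
    calc |x| * Real.exp (θ.re * x)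
        ≤ (δ⁻¹ * Real.exp (δ * |x|)) * Real.exp ((ε₀ - δ) * |x|) := by
          refine mul_le_mul (appell_abs_le_exp δ hδ x)
            (Real.exp_le_exp.2 (appell_exp_le θ x (ε₀ - δ) (hre θ hθ)))
            (Real.exp_nonneg _) (by positivity)
      _ = δ⁻¹ * Real.exp (ε₀ * |x|) := by
          rw [mul_assoc, ← Real.exp_add]; ring_nf
  · filter_upwards with x
    intro θ _
    have := ((hasDerivAt_id θ).mul_const (x : ℂ)).cexp
    simpa [mul_comm] using this

end helpers

/-- Mean-zero property (P_α5) of the generalized Appell polynomials in one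
dimension: `𝔼_μ(P_n^α) = 0` for `n ≥ 1`. -/
theorem appell_Pα5 (μ : Measure ℝ) [IsProbabilityMeasure μ]
    (ε₀ : ℝ) (hε₀ : 0 < ε₀)
    (hexp : Integrable (fun x : ℝ => Real.exp (ε₀ * |x|)) μ)
    (L : ℂ → ℂ)
    (hL : ∀ θ : ℂ, |θ.re| ≤ ε₀ → L θ = ∫ x : ℝ, Complex.exp (θ * x) ∂μ)
    (ε σ : ℝ) (hε : 0 < ε) (hεε₀ : ε < ε₀) (hσ : 0 < σ)
    (α : ℂ → ℂ)
    (hα : ∃ U : Set ℂ, IsOpen U ∧ Metric.closedBall (0 : ℂ) σ ⊆ U ∧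
      DifferentiableOn ℂ α U)
    (hα0 : α 0 = 0)
    (hαbound : ∀ θ : ℂ, ‖θ‖ ≤ σ → ‖α θ‖ ≤ ε)
    (hLne : ∀ θ : ℂ, ‖θ‖ ≤ σ → L (α θ) ≠ 0)
    (P : ℕ → ℝ → ℂ)
    (hP : ∀ n : ℕ, ∀ x : ℝ,
      P n x = iteratedDeriv n (fun θ => Complex.exp (x * α θ) / L (α θ)) 0) :
    ∀ n : ℕ, 1 ≤ n →
      Integrable (fun x : ℝ => P n x) μ ∧ ∫ x : ℝ, P n x ∂μ = 0 := by
  obtain ⟨U, hUopen, hUsub, hαdiff⟩ := hα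
  intro n hn
  set f : ℝ → ℂ → ℂ := fun x θ => Complex.exp (x * α θ) / L (α θ) with hf
  set c : ℝ → ℂ := circleMap 0 σ with hc
  have hnormc : ∀ t, ‖c t‖ = σ := fun t => by
    simp [hc, abs_of_pos hσ]
  have hcmem : ∀ t : ℝ, c t ∈ Metric.closedBall (0:ℂ) σ := fun t =>
    mem_closedBall_zero_iff.2 (hnormc t).le
  have hcne : ∀ t, c t ≠ 0 := fun t => circleMap_ne_center hσ.ne'
  -- basic facts about α on the closed ball
  have hαre : ∀ θ ∈ Metric.closedBall (0:ℂ) σ, |(α θ).re| < ε₀ := by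
    intro θ hθ
    exact lt_of_le_of_lt ((Complex.abs_re_le_norm _).trans
      (hαbound θ (mem_closedBall_zero_iff.1 hθ))) hεε₀
  have hαAt : ∀ θ ∈ Metric.closedBall (0:ℂ) σ, DifferentiableAt ℂ α θ := fun θ hθ =>
    hαdiff.differentiableAt (hUopen.mem_nhds (hUsub hθ))
  have hLα : ∀ θ ∈ Metric.closedBall (0:ℂ) σ, DifferentiableAt ℂ L (α θ) := fun θ hθ =>
    appell_L_diff μ ε₀ hexp L hL (α θ) (hαre θ hθ)
  have hLne' : ∀ θ ∈ Metric.closedBall (0:ℂ) σ, L (α θ) ≠ 0 := fun θ hθ =>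
    hLne θ (mem_closedBall_zero_iff.1 hθ)
  -- f x is holomorphic on the closed ball
  have hfx : ∀ x : ℝ, DifferentiableOn ℂ (f x) (Metric.closedBall (0:ℂ) σ) := by
    intro x θ hθ
    have h1 : DifferentiableAt ℂ (fun θ => Complex.exp (x * α θ)) θ :=
      ((hαAt θ hθ).const_mul _).cexp
    have h2 : DifferentiableAt ℂ (fun θ => L (α θ)) θ := (hLα θ hθ).comp θ (hαAt θ hθ)
    exact (h1.div h2 (hLne' θ hθ)).differentiableWithinAt
  -- power series via Cauchy
  set R : NNReal := ⟨σ, hσ.le⟩ with hR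
  have hps : ∀ x : ℝ, HasFPowerSeriesOnBall (f x) (cauchyPowerSeries (f x) 0 σ) 0 R := by
    intro x
    exact DifferentiableOn.hasFPowerSeriesOnBall (R := R) (hfx x) (by exact_mod_cast hσ)
  -- P n x as a circle integral
  set K : ℂ := (n.factorial : ℂ) * (2 * Real.pi * Complex.I)⁻¹ with hK
  have hPval : ∀ x : ℝ, P n x =
      K * ∮ z in C(0, σ), (1 / z) ^ n * (z⁻¹ * f x z) := by
    intro x
    rw [hP]
    have hfeq : (fun θ => Complex.exp ((x:ℂ) * α θ) / L (α θ)) = f x := rfl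
    rw [hfeq, iteratedDeriv_eq_iteratedFDeriv]
    have h1 := (hps x).factorial_smul (1 : ℂ) n
    rw [← h1, cauchyPowerSeries_apply]
    simp only [smul_eq_mul, sub_zero, nsmul_eq_mul]
    rw [hK]
    ring
  -- continuity facts along the circle
  have hcontc : Continuous c := continuous_circleMap 0 σ
  have hcont1 : Continuous fun t => α (c t) :=
    hαdiff.continuousOn.comp_continuous hcontc fun t => hUsub (hcmem t)
  have hcont2 : Continuous fun t => L (α (c t)) :=
    continuous_iff_continuousAt.2 fun t =>
      ContinuousAt.comp (g := L) (f := fun t => α (c t))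
        ((hLα _ (hcmem t)).continuousAt) hcont1.continuousAt
  -- uniform bound for (L ∘ α)⁻¹ on the closed ball
  obtain ⟨C, hC⟩ := (isCompact_closedBall (0:ℂ) σ).exists_bound_of_continuousOn
    (f := fun θ => (L (α θ))⁻¹)
    (fun θ hθ => (((hLα θ hθ).continuousAt.comp
      (hαAt θ hθ).continuousAt).continuousWithinAt).inv₀ (hLne' θ hθ))
  have hC0 : 0 ≤ C := le_trans (norm_nonneg _) (hC 0 (mem_closedBall_self hσ.le))
  have hfbound : ∀ (x : ℝ), ∀ θ ∈ Metric.closedBall (0:ℂ) σ,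
      ‖f x θ‖ ≤ Real.exp (ε₀ * |x|) * C := by
    intro x θ hθ
    show ‖Complex.exp (↑x * α θ) / L (α θ)‖ ≤ _
    rw [div_eq_mul_inv, norm_mul, mul_comm (↑x : ℂ) (α θ), appell_norm_cexp]
    exact mul_le_mul (Real.exp_le_exp.2 (appell_exp_le _ x ε₀ (hαre θ hθ).le))
      (hC θ hθ) (norm_nonneg _) (Real.exp_nonneg _)
  -- the parametrised circle integrand
  set ν : Measure ℝ := volume.restrict (Ioc (0:ℝ) (2 * Real.pi)) with hν
  haveI : IsFiniteMeasure ν := by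
    constructor
    rw [hν, Measure.restrict_apply_univ]
    simp [Real.volume_Ioc]
    exact ENNReal.mul_lt_top (by norm_num) ENNReal.ofReal_lt_top
  set g : ℝ → ℝ → ℂ :=
    fun x t => (c t * Complex.I) * ((1 / c t) ^ n * ((c t)⁻¹ * f x (c t))) with hg
  have hπ : (0:ℝ) ≤ 2 * Real.pi := by positivity
  have hPν : ∀ x : ℝ, P n x = K * ∫ t, g x t ∂ν := by
    intro x
    rw [hPval x]
    congr 1
    have hdef : (∮ z in C(0, σ), (1 / z) ^ n * (z⁻¹ * f x z)) =
        ∫ t in (0:ℝ)..(2 * Real.pi), deriv (circleMap 0 σ) t •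
          ((1 / circleMap 0 σ t) ^ n * ((circleMap 0 σ t)⁻¹ * f x (circleMap 0 σ t))) := rfl
    rw [hdef, intervalIntegral.integral_of_le hπ]
    refine integral_congr_ae (Filter.Eventually.of_forall fun t => ?_)
    simp only [deriv_circleMap, smul_eq_mul, hg, hc]
  -- joint continuity and integrability on the product
  have hGmeas : Continuous fun p : ℝ × ℝ => g p.1 p.2 := by
    have h1 : Continuous fun p : ℝ × ℝ => Complex.exp (↑p.1 * α (c p.2)) :=
      Complex.continuous_exp.comp
        ((Complex.continuous_ofReal.comp continuous_fst).mul (hcont1.comp continuous_snd))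
    have h2 : Continuous fun p : ℝ × ℝ => f p.1 (c p.2) :=
      h1.div (hcont2.comp continuous_snd) fun p => hLne' _ (hcmem p.2)
    exact ((hcontc.comp continuous_snd).mul continuous_const).mul
      (((continuous_const.div (hcontc.comp continuous_snd) fun p => hcne p.2).pow n).mul
        (((hcontc.comp continuous_snd).inv₀ fun p => hcne p.2).mul h2))
  have hGint : Integrable (fun p : ℝ × ℝ => g p.1 p.2) (μ.prod ν) := by
    have hbint := Integrable.mul_prod (hexp.const_mul (σ * ((1/σ)^n * (σ⁻¹ * C))))
      (integrable_const (1:ℝ) (μ := ν))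
    refine hbint.mono' hGmeas.aestronglyMeasurable ?_
    refine Filter.Eventually.of_forall fun p => ?_
    show ‖(c p.2 * Complex.I) * ((1 / c p.2) ^ n * ((c p.2)⁻¹ * f p.1 (c p.2)))‖ ≤ _
    calc ‖(c p.2 * Complex.I) * ((1 / c p.2) ^ n * ((c p.2)⁻¹ * f p.1 (c p.2)))‖
        = σ * ((1/σ)^n * (σ⁻¹ * ‖f p.1 (c p.2)‖)) := by
          rw [norm_mul, norm_mul, norm_mul, norm_mul, norm_pow, norm_div, norm_one,
            norm_inv, hnormc, Complex.norm_I, mul_one]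
      _ ≤ σ * ((1/σ)^n * (σ⁻¹ * (Real.exp (ε₀ * |p.1|) * C))) := by
          gcongr
          exact hfbound _ _ (hcmem _)
      _ = σ * ((1/σ)^n * (σ⁻¹ * C)) * Real.exp (ε₀ * |p.1|) * 1 := by ring
  have hswap : ∫ x, ∫ t, g x t ∂ν ∂μ = ∫ t, ∫ x, g x t ∂μ ∂ν :=
    integral_integral_swap hGint
  have hPint : Integrable (fun x : ℝ => P n x) μ := by
    have h := hGint.integral_prod_left
    exact (h.const_mul K).congr (Filter.Eventually.of_forall fun x => (hPν x).symm)
  -- inner integral equals one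
  have hinner : ∀ t : ℝ, ∫ x : ℝ, f x (c t) ∂μ = 1 := by
    intro t
    have hre' : |(α (c t)).re| ≤ ε₀ := (hαre _ (hcmem t)).le
    have heq : ∀ x : ℝ, f x (c t) = (L (α (c t)))⁻¹ * Complex.exp (α (c t) * x) := by
      intro x
      show Complex.exp (↑x * α (c t)) / L (α (c t)) = _
      rw [div_eq_mul_inv, mul_comm (↑x : ℂ) (α (c t)), mul_comm]
    simp_rw [heq]
    rw [integral_const_mul, ← hL _ hre']
    exact inv_mul_cancel₀ (hLne' _ (hcmem t))
  have hginner : ∀ t : ℝ, ∫ x : ℝ, g x t ∂μ =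
      (c t * Complex.I) * ((1 / c t) ^ n * (c t)⁻¹) := by
    intro t
    show (∫ x : ℝ, (c t * Complex.I) * ((1 / c t) ^ n * ((c t)⁻¹ * f x (c t))) ∂μ) = _
    rw [integral_const_mul, integral_const_mul, integral_const_mul, hinner t, mul_one]
  have houter : ∫ t, (c t * Complex.I) * ((1 / c t) ^ n * (c t)⁻¹) ∂ν = 0 := by
    have hzpow : ∀ t : ℝ, (c t * Complex.I) * ((1 / c t) ^ n * (c t)⁻¹) =
        deriv (circleMap 0 σ) t • ((circleMap 0 σ t - 0) ^ (-(n:ℤ) - 1)) := by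
      intro t
      rw [deriv_circleMap, smul_eq_mul, sub_zero, zpow_sub₀ (hcne t), zpow_neg,
        zpow_natCast, zpow_one, one_div, inv_pow, div_eq_mul_inv]
    calc (∫ t, (c t * Complex.I) * ((1 / c t) ^ n * (c t)⁻¹) ∂ν)
        = ∫ t in (0:ℝ)..(2 * Real.pi), deriv (circleMap 0 σ) t •
            ((circleMap 0 σ t - 0) ^ (-(n:ℤ) - 1)) := by
          rw [intervalIntegral.integral_of_le hπ]
          exact integral_congr_ae (Filter.Eventually.of_forall fun t => hzpow t)
      _ = ∮ z in C(0, σ), (z - 0) ^ (-(n:ℤ) - 1) := rfl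
      _ = 0 := circleIntegral.integral_sub_zpow_of_ne (by omega) _ _ _
  refine ⟨hPint, ?_⟩
  calc (∫ x : ℝ, P n x ∂μ)
      = ∫ x : ℝ, K * ∫ t, g x t ∂ν ∂μ :=
        integral_congr_ae (Filter.Eventually.of_forall hPν)
    _ = K * ∫ x : ℝ, ∫ t, g x t ∂ν ∂μ := integral_const_mul _ _
    _ = K * ∫ t, ∫ x : ℝ, g x t ∂μ ∂ν := by rw [hswap]
    _ = K * ∫ t, (c t * Complex.I) * ((1 / c t) ^ n * (c t)⁻¹) ∂ν := by
        rw [integral_congr_ae (Filter.Eventually.of_forall hginner)]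
    _ = 0 := by rw [houter]; exact mul_zero K
end

section
/- Let l and l̃ be formal power series over ℝ, each with constant coefficient 1, and let α be a formal power series over ℝ with zero constant coefficient. Define P_n^α(x) := n! · (coefficient of T^n in (E_x · l⁻¹)∘α), P̃_n^α(x) := n! · (coefficient of T^n in (E_x · l̃⁻¹)∘α), and M̃_j^α := j! · (coefficient of T^j in l̃∘α). Then for every n ∈ ℕ and every x ∈ ℝ: P_n^α(x) = ∑_{k+m+j=n} n!/(k!·m!·j!) · P̃_k^α(x) · P_m^α(0) · M̃_j^α, where the sum runs over all triples (k,m,j) of natural numbers with k + m + j = n. -/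
/-- Substitution `F ∘ α` of a power series `α` with zero constant coefficient
into a power series `F`, given by the coefficient formula
`coeff_n (F ∘ α) = ∑_{m=0}^n coeff_m F ⬝ coeff_n (α^m)`. -/
noncomputable def pscomp (F α : PowerSeries ℝ) : PowerSeries ℝ :=
  PowerSeries.mk fun n =>
    ∑ m ∈ Finset.range (n + 1),
      PowerSeries.coeff m F * PowerSeries.coeff n (α ^ m)

/-- The generalized Appell polynomials of `l` associated to `α`:
`P_n^α(x) = n! ⬝ coeff_n ((E_x ⬝ l⁻¹) ∘ α)`. -/
noncomputable def appellPα (l α : PowerSeries ℝ) (n : ℕ) (x : ℝ) : ℝ :=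
  (n.factorial : ℝ) * PowerSeries.coeff n (pscomp (expSeries x * l⁻¹) α)

/-- The generalized moments of `l` associated to `α`:
`M_n^α = n! ⬝ coeff_n (l ∘ α)`. -/
noncomputable def momentα (l α : PowerSeries ℝ) (n : ℕ) : ℝ :=
  (n.factorial : ℝ) * PowerSeries.coeff n (pscomp l α)

lemma coeff_pow_eq_zero_aux {α : PowerSeries ℝ} (hα : PowerSeries.constantCoeff α = 0)
    {n m : ℕ} (h : n < m) : PowerSeries.coeff n (α ^ m) = 0 := by
  have hX : (PowerSeries.X : PowerSeries ℝ) ^ m ∣ α ^ m :=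
    pow_dvd_pow_of_dvd (PowerSeries.X_dvd_iff.mpr hα) m
  exact PowerSeries.X_pow_dvd_iff.mp hX n h

lemma sum_range_antidiagonal_aux (N : ℕ) (g : ℕ × ℕ → ℝ) :
    ∑ m ∈ Finset.range N, ∑ p ∈ Finset.HasAntidiagonal.antidiagonal m, g p
      = ∑ p ∈ (Finset.range N ×ˢ Finset.range N).filter (fun p => p.1 + p.2 < N), g p := by
  rw [Finset.sum_sigma']
  refine Finset.sum_nbij' (fun s => s.2) (fun p => ⟨p.1 + p.2, p⟩) ?_ ?_ ?_ ?_ ?_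
  · intro s hs
    simp only [Finset.mem_sigma, Finset.mem_range, Finset.HasAntidiagonal.mem_antidiagonal] at hs
    simp only [Finset.mem_filter, Finset.mem_product, Finset.mem_range]
    omega
  · intro p hp
    simp only [Finset.mem_filter, Finset.mem_product, Finset.mem_range] at hp
    simp only [Finset.mem_sigma, Finset.mem_range, Finset.HasAntidiagonal.mem_antidiagonal]
    exact ⟨by omega, trivial⟩
  · rintro ⟨m, p⟩ hs
    simp only [Finset.mem_sigma, Finset.mem_range, Finset.HasAntidiagonal.mem_antidiagonal] at hs
    simp only [Sigma.mk.inj_iff, heq_eq_eq, and_true]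
    omega
  · rintro p hp; rfl
  · rintro s hs; rfl

lemma pscomp_mul (F G α : PowerSeries ℝ) (hα : PowerSeries.constantCoeff α = 0) :
    pscomp (F * G) α = pscomp F α * pscomp G α := by
  ext n
  rw [PowerSeries.coeff_mul]
  simp only [pscomp, PowerSeries.coeff_mk]
  have hRHS : ∀ p ∈ Finset.HasAntidiagonal.antidiagonal n,
      (∑ m ∈ Finset.range (p.1 + 1), PowerSeries.coeff m F * PowerSeries.coeff p.1 (α ^ m)) *
      (∑ m ∈ Finset.range (p.2 + 1), PowerSeries.coeff m G * PowerSeries.coeff p.2 (α ^ m))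
      = ∑ i ∈ Finset.range (n + 1), ∑ j ∈ Finset.range (n + 1),
          PowerSeries.coeff i F * PowerSeries.coeff j G *
            (PowerSeries.coeff p.1 (α ^ i) * PowerSeries.coeff p.2 (α ^ j)) := by
    intro p hp
    rw [Finset.HasAntidiagonal.mem_antidiagonal] at hp
    have h1 : (∑ m ∈ Finset.range (p.1 + 1),
        PowerSeries.coeff m F * PowerSeries.coeff p.1 (α ^ m))
        = ∑ m ∈ Finset.range (n + 1),
        PowerSeries.coeff m F * PowerSeries.coeff p.1 (α ^ m) := by
      refine Finset.sum_subset ?_ ?_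
      · intro i hi; simp only [Finset.mem_range] at *; omega
      · intro i hi hni
        simp only [Finset.mem_range] at hi hni
        rw [coeff_pow_eq_zero_aux hα (by omega), mul_zero]
    have h2 : (∑ m ∈ Finset.range (p.2 + 1),
        PowerSeries.coeff m G * PowerSeries.coeff p.2 (α ^ m))
        = ∑ m ∈ Finset.range (n + 1),
        PowerSeries.coeff m G * PowerSeries.coeff p.2 (α ^ m) := by
      refine Finset.sum_subset ?_ ?_
      · intro i hi; simp only [Finset.mem_range] at *; omega
      · intro i hi hni
        simp only [Finset.mem_range] at hi hni
        rw [coeff_pow_eq_zero_aux hα (by omega), mul_zero]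
    rw [h1, h2, Finset.sum_mul_sum]
    exact Finset.sum_congr rfl fun i _ => Finset.sum_congr rfl fun j _ => by ring
  rw [Finset.sum_congr rfl hRHS, Finset.sum_comm]
  have hswap : ∀ i ∈ Finset.range (n + 1),
      (∑ p ∈ Finset.HasAntidiagonal.antidiagonal n, ∑ j ∈ Finset.range (n + 1),
        PowerSeries.coeff i F * PowerSeries.coeff j G *
          (PowerSeries.coeff p.1 (α ^ i) * PowerSeries.coeff p.2 (α ^ j)))
      = ∑ j ∈ Finset.range (n + 1),
        PowerSeries.coeff i F * PowerSeries.coeff j G *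
          PowerSeries.coeff n (α ^ (i + j)) := by
    intro i _
    rw [Finset.sum_comm]
    refine Finset.sum_congr rfl fun j _ => ?_
    rw [pow_add, PowerSeries.coeff_mul, Finset.mul_sum]
  rw [Finset.sum_congr rfl hswap]
  -- Now RHS is ∑ i ∑ j over range (n+1), F_i G_j coeff_n α^(i+j). Transform LHS.
  have hLHS : ∀ m ∈ Finset.range (n + 1),
      PowerSeries.coeff m (F * G) * PowerSeries.coeff n (α ^ m)
      = ∑ p ∈ Finset.HasAntidiagonal.antidiagonal m,
          PowerSeries.coeff p.1 F * PowerSeries.coeff p.2 G *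
            PowerSeries.coeff n (α ^ (p.1 + p.2)) := by
    intro m _
    rw [PowerSeries.coeff_mul, Finset.sum_mul]
    refine Finset.sum_congr rfl fun p hp => ?_
    rw [Finset.HasAntidiagonal.mem_antidiagonal] at hp
    rw [hp]
  rw [Finset.sum_congr rfl hLHS, sum_range_antidiagonal_aux, ← Finset.sum_product']
  refine Finset.sum_subset (Finset.filter_subset _ _) ?_
  intro p hp hnp
  simp only [Finset.mem_filter, Finset.mem_product, Finset.mem_range, not_and, not_lt] at hp hnp
  rw [coeff_pow_eq_zero_aux hα (by omega), mul_zero]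

lemma coeff_mul_mul (A B C : PowerSeries ℝ) (n : ℕ) :
    PowerSeries.coeff n (A * B * C) =
      ∑ t ∈ (Finset.range (n + 1) ×ˢ Finset.range (n + 1) ×ˢ
          Finset.range (n + 1)).filter (fun t => t.1 + t.2.1 + t.2.2 = n),
        PowerSeries.coeff t.1 A * PowerSeries.coeff t.2.1 B *
          PowerSeries.coeff t.2.2 C := by
  rw [mul_assoc, PowerSeries.coeff_mul]
  have h : ∀ p ∈ Finset.HasAntidiagonal.antidiagonal n,
      PowerSeries.coeff p.1 A * PowerSeries.coeff p.2 (B * C)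
      = ∑ q ∈ Finset.HasAntidiagonal.antidiagonal p.2,
          PowerSeries.coeff p.1 A * (PowerSeries.coeff q.1 B * PowerSeries.coeff q.2 C) := by
    intro p _
    rw [PowerSeries.coeff_mul, Finset.mul_sum]
  rw [Finset.sum_congr rfl h, Finset.sum_sigma']
  refine Finset.sum_nbij' (fun s => (s.1.1, s.2.1, s.2.2))
    (fun t => ⟨(t.1, t.2.1 + t.2.2), (t.2.1, t.2.2)⟩) ?_ ?_ ?_ ?_ ?_
  · rintro ⟨⟨a, b⟩, ⟨c, d⟩⟩ hs
    simp only [Finset.mem_sigma, Finset.HasAntidiagonal.mem_antidiagonal] at hs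
    simp only [Finset.mem_filter, Finset.mem_product, Finset.mem_range]
    omega
  · rintro ⟨a, c, d⟩ ht
    simp only [Finset.mem_filter, Finset.mem_product, Finset.mem_range] at ht
    simp only [Finset.mem_sigma, Finset.HasAntidiagonal.mem_antidiagonal]
    exact ⟨by omega, trivial⟩
  · rintro ⟨⟨a, b⟩, ⟨c, d⟩⟩ hs
    simp only [Finset.mem_sigma, Finset.HasAntidiagonal.mem_antidiagonal] at hs
    simp only [Sigma.mk.inj_iff, Prod.mk.injEq, heq_eq_eq, and_true, true_and]
    omega
  · rintro ⟨a, c, d⟩ ht; rfl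
  · rintro ⟨⟨a, b⟩, ⟨c, d⟩⟩ hs
    simp only []
    ring

lemma expSeries_zero : expSeries 0 = 1 := by
  ext k
  cases k with
  | zero => simp [expSeries]
  | succ k => simp [expSeries, PowerSeries.coeff_one]

/-- Change of measure re-decomposition of generalized Appell polynomials:
`P_n^α(x) = ∑_{k+m+j=n} n!/(k!m!j!) P̃_k^α(x) P_m^α(0) M̃_j^α`. -/
theorem appell_change_of_measure (l lt α : PowerSeries ℝ)
    (hl : PowerSeries.constantCoeff l = 1)
    (hlt : PowerSeries.constantCoeff lt = 1)
    (hα : PowerSeries.constantCoeff α = 0)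
    (n : ℕ) (x : ℝ) :
    appellPα l α n x =
      ∑ t ∈ (Finset.range (n + 1) ×ˢ Finset.range (n + 1) ×ˢ
          Finset.range (n + 1)).filter (fun t => t.1 + t.2.1 + t.2.2 = n),
        (n.factorial : ℝ) /
            ((t.1.factorial : ℝ) * (t.2.1.factorial : ℝ) * (t.2.2.factorial : ℝ)) *
          appellPα lt α t.1 x * appellPα l α t.2.1 0 * momentα lt α t.2.2 := by
  have hinv : lt⁻¹ * lt = 1 :=
    PowerSeries.inv_mul_cancel lt (by rw [hlt]; exact one_ne_zero)
  have key : expSeries x * l⁻¹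
      = (expSeries x * lt⁻¹) * (expSeries 0 * l⁻¹) * lt := by
    rw [expSeries_zero, one_mul]
    calc expSeries x * l⁻¹ = expSeries x * l⁻¹ * (lt⁻¹ * lt) := by rw [hinv, mul_one]
      _ = expSeries x * lt⁻¹ * l⁻¹ * lt := by ring
  unfold appellPα momentα
  rw [key, pscomp_mul _ _ _ hα, pscomp_mul _ _ _ hα, coeff_mul_mul, Finset.mul_sum]
  refine Finset.sum_congr rfl fun t ht => ?_
  have h1 : (t.1.factorial : ℝ) ≠ 0 := Nat.cast_ne_zero.mpr t.1.factorial_ne_zero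
  have h2 : (t.2.1.factorial : ℝ) ≠ 0 := Nat.cast_ne_zero.mpr t.2.1.factorial_ne_zero
  have h3 : (t.2.2.factorial : ℝ) ≠ 0 := Nat.cast_ne_zero.mpr t.2.2.factorial_ne_zero
  field_simp
end
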